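/- arXiv:math/0411245 — 4 statements merged into one kernel-verified Lean document; each statement's English description precedes it below -/
import Mathlib

section
/- Let f : X → X be a polynomial map of a nonempty closed complex algebraic subset X of ℂ^N to itself that is open, with X − f(X) finite, and let Ω ⊆ X be a cofinite subset with f(Ω) ⊆ Ω. Let S = ⋂_{k>0} f^k(Ω) be the stable image. Then f(S) = S, i.e., the restriction of f to S is a surjective self-map of S (and it is open as a map from S to S). -/
/-!
Write `Rₖ = F^[k] '' Ω`; these sets decrease, each has finite complement in `X`, and
`S = ⋂ₖ Rₖ` is forward invariant. Call `w ∈ Ω` *bad* if `w ∉ S` but `F w ∈ S`. Tracing a bad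
point backwards through the `Rₖ` ends at a point of `Ω \ F '' Ω`, and a forward orbit meets at
most one bad point, since after the first one it stays in `S`. So there are finitely many bad
points, and beyond some level `H` none of them lies in `R_H`; that is, every `w ∈ R_H` with
`F w ∈ S` lies in `S`. Surjectivity follows from `S ⊆ R_{H+1} = F '' R_H`, and openness from the
openness of `F` on `X` near `S`, where `R_H` contains a relatively open neighbourhood of `S`.
-/

open Set Function Filter

section StableImage

variable {α : Type*} {f : α → α} {s t X : Set α}

def stableImage (f : α → α) (s : Set α) : Set α := ⋂ k, f^[k] '' s

theorem iterate_succ_image (f : α → α) (s : Set α) (k : ℕ) :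
    f^[k + 1] '' s = f '' (f^[k] '' s) := by
  rw [iterate_succ', image_comp]

theorem antitone_iterate_image (h : MapsTo f s s) : Antitone fun k => f^[k] '' s :=
  antitone_nat_of_succ_le fun k => by
    rw [iterate_succ, image_comp]
    exact image_mono h.image_subset

theorem biInter_pos_iterate_image (h : MapsTo f s s) :
    ⋂ k > 0, f^[k] '' s = stableImage f s := by
  refine Subset.antisymm (subset_iInter fun k => ?_) (subset_iInter₂ fun k _ => iInter_subset _ k)
  exact (biInter_subset_of_mem k.succ_pos).trans (antitone_iterate_image h k.le_succ)

theorem stableImage_subset_iterate_image (k : ℕ) : stableImage f s ⊆ f^[k] '' s :=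
  iInter_subset _ k

theorem mapsTo_stableImage (h : MapsTo f s s) : MapsTo f (stableImage f s) (stableImage f s) :=
  fun z hz => mem_iInter.2 fun k => antitone_iterate_image h k.le_succ <| by
    change f z ∈ f^[k + 1] '' s
    rw [iterate_succ_image]
    exact mem_image_of_mem f (mem_iInter.1 hz k)

theorem finite_diff_image (hX : (X \ f '' X).Finite) (ht : (X \ t).Finite) :
    (X \ f '' t).Finite := by
  refine (hX.union (ht.image f)).subset fun x ⟨hxX, hxt⟩ => ?_
  by_cases hx : x ∈ f '' X
  · obtain ⟨y, hyX, rfl⟩ := hx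
    exact Or.inr ⟨y, ⟨hyX, fun hyt => hxt (mem_image_of_mem f hyt)⟩, rfl⟩
  · exact Or.inl ⟨hxX, hx⟩

theorem finite_diff_iterate_image (hX : (X \ f '' X).Finite) (hs : (X \ s).Finite) (k : ℕ) :
    (X \ f^[k] '' s).Finite := by
  induction k with
  | zero => simpa using hs
  | succ k ih => rw [iterate_succ_image]; exact finite_diff_image hX ih

theorem Set.MapsTo.subsingleton_range_iterate_inter_preimage_diff (ht : MapsTo f t t) (c : α) :
    (range (fun n => f^[n] c) ∩ (f ⁻¹' t \ t)).Subsingleton := by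
  have later_in : ∀ m n, m < n → f (f^[m] c) ∈ t → f^[n] c ∈ t := by
    intro m n hmn hm
    obtain ⟨d, rfl⟩ := Nat.exists_eq_add_of_lt hmn
    rw [add_assoc, add_comm, iterate_add_apply, iterate_succ_apply]
    exact ht.iterate d hm
  rintro _ ⟨⟨m, rfl⟩, hm, hm'⟩ _ ⟨⟨n, rfl⟩, hn, hn'⟩
  rcases lt_trichotomy m n with hmn | rfl | hnm
  · exact absurd (later_in m n hmn hm) hn'
  · rfl
  · exact absurd (later_in n m hnm hn) hm'

theorem exists_iterate_eq_of_notMem_iterate_image {w : α} (hw : w ∈ s) {k : ℕ}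
    (hwk : w ∉ f^[k] '' s) : ∃ c ∈ s \ f '' s, ∃ n, f^[n] c = w := by
  induction k generalizing w with
  | zero => simp [hw] at hwk
  | succ k ih =>
    by_cases hwf : w ∈ f '' s
    · obtain ⟨v, hv, rfl⟩ := hwf
      have hvk : v ∉ f^[k] '' s := fun hvk => hwk (by
        rw [iterate_succ_image]; exact mem_image_of_mem f hvk)
      obtain ⟨c, hc, n, rfl⟩ := ih hv hvk
      exact ⟨c, hc, n + 1, iterate_succ_apply' f n c⟩
    · exact ⟨w, ⟨hw, hwf⟩, 0, rfl⟩

theorem finite_inter_preimage_stableImage_diff (h : MapsTo f s s) (hfin : (s \ f '' s).Finite) :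
    (s ∩ (f ⁻¹' stableImage f s \ stableImage f s)).Finite := by
  refine (hfin.biUnion fun c _ =>
    ((mapsTo_stableImage h).subsingleton_range_iterate_inter_preimage_diff c).finite).subset ?_
  rintro w ⟨hw, hwS⟩
  obtain ⟨k, hk⟩ : ∃ k, w ∉ f^[k] '' s := by simpa [stableImage] using hwS.2
  obtain ⟨c, hc, n, rfl⟩ := exists_iterate_eq_of_notMem_iterate_image hw hk
  exact mem_biUnion hc ⟨mem_range_self n, hwS⟩

theorem exists_iterate_image_inter_preimage_subset_stableImage (h : MapsTo f s s)
    (hfin : (s \ f '' s).Finite) :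
    ∃ H, f^[H] '' s ∩ f ⁻¹' stableImage f s ⊆ stableImage f s := by
  set bad := s ∩ (f ⁻¹' stableImage f s \ stableImage f s)
  have eventually_avoid : ∀ᶠ H in atTop, ∀ w ∈ bad, w ∉ f^[H] '' s := by
    refine (eventually_all_finite (finite_inter_preimage_stableImage_diff h hfin)).2 ?_
    rintro w ⟨-, -, hwS⟩
    obtain ⟨k, hk⟩ : ∃ k, w ∉ f^[k] '' s := by simpa [stableImage] using hwS
    exact eventually_atTop.2 ⟨k, fun H hH hwH => hk (antitone_iterate_image h hH hwH)⟩
  obtain ⟨H, hH⟩ := eventually_avoid.exists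
  refine ⟨H, fun w ⟨hwH, hwS⟩ => by_contra fun hw => hH w ?_ hwH⟩
  exact ⟨by simpa using antitone_iterate_image h (Nat.zero_le H) hwH, hwS, hw⟩

theorem image_stableImage (h : MapsTo f s s) (hfin : (s \ f '' s).Finite) :
    f '' stableImage f s = stableImage f s := by
  refine (mapsTo_stableImage h).image_subset.antisymm fun z hz => ?_
  obtain ⟨H, hH⟩ := exists_iterate_image_inter_preimage_subset_stableImage h hfin
  have hzH := stableImage_subset_iterate_image (H + 1) hz
  rw [iterate_succ_image] at hzH
  obtain ⟨w, hw, rfl⟩ := hzH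
  exact ⟨w, hH ⟨hw, hz⟩, rfl⟩

end StableImage

section OpenMap

variable {α : Type*} [TopologicalSpace α] {f : α → α} {X : Set α}

theorem exists_isOpen_inter_eq_image_inter (hmaps : MapsTo f X X)
    (hopen : IsOpenMap (hmaps.restrict f X X)) {O : Set α} (hO : IsOpen O) :
    ∃ V, IsOpen V ∧ V ∩ X = f '' (O ∩ X) := by
  obtain ⟨V, hV, hVeq⟩ := isOpen_induced_iff.1 (hopen _ (hO.preimage continuous_subtype_val))
  refine ⟨V, hV, ?_⟩
  have := congrArg (image Subtype.val) hVeq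
  rwa [Subtype.image_preimage_coe, ← image_comp, MapsTo.restrict_commutes, image_comp,
    Subtype.image_preimage_coe, inter_comm, inter_comm X] at this

theorem exists_isOpen_image_inter_eq (hmaps : MapsTo f X X)
    (hopen : IsOpenMap (hmaps.restrict f X X)) {T R : Set α} (hTX : T ⊆ X) (hT : MapsTo f T T)
    (hR : IsClosed (X \ R)) (hTR : T ⊆ R) (hRT : R ∩ f ⁻¹' T ⊆ T) {U : Set α} (hU : IsOpen U) :
    ∃ V, IsOpen V ∧ f '' (U ∩ T) = V ∩ T := by
  obtain ⟨V, hV, hVeq⟩ :=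
    exists_isOpen_inter_eq_image_inter hmaps hopen (hU.inter hR.isOpen_compl)
  refine ⟨V, hV, Subset.antisymm ?_ ?_⟩
  · rintro _ ⟨y, ⟨hyU, hyT⟩, rfl⟩
    have hy : f y ∈ V ∩ X := by
      rw [hVeq]
      exact mem_image_of_mem f ⟨⟨hyU, fun hy => hy.2 (hTR hyT)⟩, hTX hyT⟩
    exact ⟨hy.1, hT hyT⟩
  · rintro z ⟨hzV, hzT⟩
    have hz : z ∈ V ∩ X := ⟨hzV, hTX hzT⟩
    rw [hVeq] at hz
    obtain ⟨w, ⟨⟨hwU, hwR⟩, hwX⟩, rfl⟩ := hz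
    exact ⟨w, ⟨hwU, hRT ⟨by_contra fun hw => hwR ⟨hwX, hw⟩, hzT⟩⟩, rfl⟩

end OpenMap

theorem stable_image_surjective_general
    (N : ℕ)
    (X : Set (Fin N → ℂ))
    (F : (Fin N → ℂ) → (Fin N → ℂ))
    (hmaps : Set.MapsTo F X X)
    (hopen : IsOpenMap (Set.MapsTo.restrict F X X hmaps))
    (hcoim : (X \ F '' X).Finite)
    (Ω : Set (Fin N → ℂ)) (hΩX : Ω ⊆ X) (hΩcof : (X \ Ω).Finite)
    (hinv : F '' Ω ⊆ Ω) :
    F '' (⋂ k > 0, F^[k] '' Ω) = ⋂ k > 0, F^[k] '' Ω ∧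
    (∀ U : Set (Fin N → ℂ), IsOpen U →
      ∃ V : Set (Fin N → ℂ), IsOpen V ∧
        F '' (U ∩ ⋂ k > 0, F^[k] '' Ω) = V ∩ ⋂ k > 0, F^[k] '' Ω) := by
  have hΩ : MapsTo F Ω Ω := mapsTo_iff_image_subset.2 hinv
  have hfin : (Ω \ F '' Ω).Finite :=
    (finite_diff_image hcoim hΩcof).subset (sdiff_subset_sdiff_left hΩX)
  obtain ⟨H, hH⟩ := exists_iterate_image_inter_preimage_subset_stableImage hΩ hfin
  have hSX : stableImage F Ω ⊆ X := (stableImage_subset_iterate_image 0).trans (by simpa using hΩX)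
  rw [biInter_pos_iterate_image hΩ]
  exact ⟨image_stableImage hΩ hfin, fun U hU => exists_isOpen_image_inter_eq hmaps hopen hSX
    (mapsTo_stableImage hΩ) (finite_diff_iterate_image hcoim hΩcof H).isClosed
    (stableImage_subset_iterate_image H) hH hU⟩

/-- The restriction of `f` to the stable image `S = ⋂_{k>0} f^k(Ω)` is a
surjective self-map of `S`, and it is open as a map from `S` to `S`. -/
theorem stable_image_surjective
    (N : ℕ) (P : Set (MvPolynomial (Fin N) ℂ))
    (X : Set (Fin N → ℂ))
    (hX : X = {x | ∀ p ∈ P, MvPolynomial.eval x p = 0})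
    (hXne : X.Nonempty)
    (F : (Fin N → ℂ) → (Fin N → ℂ))
    (hFpoly : ∃ q : Fin N → MvPolynomial (Fin N) ℂ,
      ∀ x i, F x i = MvPolynomial.eval x (q i))
    (hmaps : Set.MapsTo F X X)
    (hopen : IsOpenMap (Set.MapsTo.restrict F X X hmaps))
    (hcoim : (X \ F '' X).Finite)
    (Ω : Set (Fin N → ℂ)) (hΩX : Ω ⊆ X) (hΩcof : (X \ Ω).Finite)
    (hinv : F '' Ω ⊆ Ω) :
    F '' (⋂ k > 0, F^[k] '' Ω) = ⋂ k > 0, F^[k] '' Ω ∧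
    (∀ U : Set (Fin N → ℂ), IsOpen U →
      ∃ V : Set (Fin N → ℂ), IsOpen V ∧
        F '' (U ∩ ⋂ k > 0, F^[k] '' Ω) = V ∩ ⋂ k > 0, F^[k] '' Ω) :=
  stable_image_surjective_general N X F hmaps hopen hcoim Ω hΩX hΩcof hinv
end

section
/- Let f be a Jacobian pair and Ω a cofinite subset of ℂ² with f(Ω) ⊆ Ω. If the restriction f|_Ω is injective, then f itself is injective and f is an automorphism of ℂ² (bijective with polynomial inverse). -/
/-!
A polynomial map with constant nonzero Jacobian determinant is a local biholomorphism, hence an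
open map. If `F a = F b` with `a ≠ b`, disjoint neighbourhoods of `a` and `b` have images meeting
in an open, hence infinite, set; all but finitely many of its points have preimages in `Ω` on both
sides, contradicting injectivity on `Ω`. So `F` is injective, and by Ax–Grothendieck bijective,
with a holomorphic inverse `G`. Each coordinate of `G` is algebraic over `ℂ[y₁, y₂]` (three
polynomials in two variables are algebraically dependent), so by Cauchy's root bound it becomes
polynomially bounded after multiplication by a nonzero polynomial; the polynomial-growth Liouville
theorem and the Nullstellensatz then show that it is a polynomial.
-/

/-- A polynomial map `ℂ² → ℂ²`: every coordinate function is polynomial. -/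
def IsPolyMap (F : (Fin 2 → ℂ) → (Fin 2 → ℂ)) : Prop :=
  ∃ q : Fin 2 → MvPolynomial (Fin 2) ℂ, ∀ x i, F x i = MvPolynomial.eval x (q i)

/-- A Jacobian pair: a polynomial map `ℂ² → ℂ²` whose Jacobian determinant is a nonzero
constant. -/
def IsJacobianPair (F : (Fin 2 → ℂ) → (Fin 2 → ℂ)) : Prop :=
  ∃ q : Fin 2 → MvPolynomial (Fin 2) ℂ,
    (∀ x i, F x i = MvPolynomial.eval x (q i)) ∧
    ∃ c : ℂ, c ≠ 0 ∧ ∀ x : Fin 2 → ℂ,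
      (Matrix.of fun i j => MvPolynomial.eval x (MvPolynomial.pderiv j (q i))).det = c

open MvPolynomial

def HasPolynomialGrowth {E F : Type*} [SeminormedAddCommGroup E] [SeminormedAddCommGroup F]
    (f : E → F) : Prop :=
  ∃ (C : ℝ) (N : ℕ), ∀ x, ‖f x‖ ≤ C * (1 + ‖x‖) ^ N

namespace HasPolynomialGrowth

variable {E F : Type*} [SeminormedAddCommGroup E] [SeminormedAddCommGroup F]

lemma bound_mono {f : E → F} {C : ℝ} {N M : ℕ} (hf : ∀ x, ‖f x‖ ≤ C * (1 + ‖x‖) ^ N)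
    (hNM : N ≤ M) (x : E) : ‖f x‖ ≤ C * (1 + ‖x‖) ^ M := by
  have hC : 0 ≤ C := by simpa using (norm_nonneg _).trans (hf 0)
  exact (hf x).trans (by gcongr; exact le_add_of_nonneg_right (norm_nonneg x))

lemma mono {f : E → F} {g : E → ℝ} (hg : HasPolynomialGrowth g) (hfg : ∀ x, ‖f x‖ ≤ g x) :
    HasPolynomialGrowth f := by
  obtain ⟨C, N, hg⟩ := hg
  exact ⟨C, N, fun x => (hfg x).trans ((Real.le_norm_self _).trans (hg x))⟩

lemma const (c : F) : HasPolynomialGrowth fun _ : E => c :=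
  ⟨‖c‖, 0, fun x => by simp⟩

lemma add {f g : E → F} (hf : HasPolynomialGrowth f) (hg : HasPolynomialGrowth g) :
    HasPolynomialGrowth fun x => f x + g x := by
  obtain ⟨C, N, hf⟩ := hf
  obtain ⟨D, M, hg⟩ := hg
  refine ⟨C + D, max N M, fun x => ?_⟩
  calc ‖f x + g x‖ ≤ ‖f x‖ + ‖g x‖ := norm_add_le _ _
    _ ≤ C * (1 + ‖x‖) ^ max N M + D * (1 + ‖x‖) ^ max N M :=
      add_le_add (bound_mono hf (le_max_left N M) x) (bound_mono hg (le_max_right N M) x)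
    _ = (C + D) * (1 + ‖x‖) ^ max N M := by ring

lemma sum {ι : Type*} (s : Finset ι) {f : ι → E → F} (hf : ∀ i ∈ s, HasPolynomialGrowth (f i)) :
    HasPolynomialGrowth fun x => ∑ i ∈ s, f i x := by
  classical
  induction s using Finset.induction_on with
  | empty => simpa using const (E := E) (0 : F)
  | insert i s hi ih =>
    simp only [Finset.sum_insert hi]
    exact (hf i (Finset.mem_insert_self i s)).add
      (ih fun j hj => hf j (Finset.mem_insert_of_mem hj))

lemma norm {f : E → F} (hf : HasPolynomialGrowth f) : HasPolynomialGrowth fun x => ‖f x‖ := by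
  simpa only [HasPolynomialGrowth, norm_norm] using hf

lemma mul {R : Type*} [SeminormedRing R] {f g : E → R} (hf : HasPolynomialGrowth f)
    (hg : HasPolynomialGrowth g) : HasPolynomialGrowth fun x => f x * g x := by
  obtain ⟨C, N, hf⟩ := hf
  obtain ⟨D, M, hg⟩ := hg
  refine ⟨C * D, N + M, fun x => ?_⟩
  calc ‖f x * g x‖ ≤ ‖f x‖ * ‖g x‖ := norm_mul_le _ _
    _ ≤ (C * (1 + ‖x‖) ^ N) * (D * (1 + ‖x‖) ^ M) :=
      mul_le_mul (hf x) (hg x) (norm_nonneg _) ((norm_nonneg _).trans (hf x))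
    _ = C * D * (1 + ‖x‖) ^ (N + M) := by ring

end HasPolynomialGrowth

lemma MvPolynomial.hasPolynomialGrowth_eval {σ 𝕜 : Type*} [Fintype σ] [NormedCommRing 𝕜]
    (p : MvPolynomial σ 𝕜) : HasPolynomialGrowth fun x : σ → 𝕜 => eval x p := by
  induction p using MvPolynomial.induction_on with
  | C a => simpa using HasPolynomialGrowth.const a
  | add p q hp hq => simpa using hp.add hq
  | mul_X p i hp =>
    have hX : HasPolynomialGrowth fun x : σ → 𝕜 => x i :=
      ⟨1, 1, fun x => by
        simpa using (norm_le_pi_norm x i).trans (le_add_of_nonneg_left zero_le_one)⟩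
    simpa using hp.mul hX

lemma Complex.differentiable_dslope {f : ℂ → ℂ} (hf : Differentiable ℂ f) (a : ℂ) :
    Differentiable ℂ (dslope f a) :=
  differentiableOn_univ.1 <| (Complex.differentiableOn_dslope Filter.univ_mem).2 hf.differentiableOn

lemma Differentiable.exists_bound_dslope {f : ℂ → ℂ} (hf : Differentiable ℂ f) {C : ℝ} {N : ℕ}
    (hb : ∀ z, ‖f z‖ ≤ C * (1 + ‖z‖) ^ (N + 1)) :
    ∃ C', ∀ z, ‖dslope f 0 z‖ ≤ C' * (1 + ‖z‖) ^ N := by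
  have hC : 0 ≤ C := by simpa using (norm_nonneg _).trans (hb 0)
  obtain ⟨M, hM⟩ := (isCompact_closedBall (0 : ℂ) 1).exists_bound_of_continuousOn
    (Complex.differentiable_dslope hf 0).continuous.continuousOn
  have hM0 : 0 ≤ M := (norm_nonneg _).trans (hM 0 (Metric.mem_closedBall_self zero_le_one))
  refine ⟨M + 4 * C, fun z => ?_⟩
  have hpow : 1 ≤ (1 + ‖z‖) ^ N := one_le_pow₀ (le_add_of_nonneg_right (norm_nonneg z))
  rcases le_or_gt ‖z‖ 1 with hz | hz
  · have := hM z (by simpa using hz)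
    nlinarith
  -- off the unit disc, `dslope f 0 z = (f z - f 0) / z` inherits the bound with one power less
  have hz' : ‖z‖ * ‖dslope f 0 z‖ ≤ ‖z‖ * (4 * C * (1 + ‖z‖) ^ N) := by
    have hf0 : ‖f 0‖ ≤ C := by simpa using hb 0
    have hslope := sub_smul_dslope f 0 z
    simp only [sub_zero, smul_eq_mul] at hslope
    calc ‖z‖ * ‖dslope f 0 z‖ = ‖f z - f 0‖ := by rw [← norm_mul, hslope]
      _ ≤ C * (1 + ‖z‖) ^ (N + 1) + C := (norm_sub_le _ _).trans (add_le_add (hb z) hf0)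
      _ ≤ 2 * C * (1 + ‖z‖) ^ N * (1 + ‖z‖) := by
          rw [pow_succ]; nlinarith [mul_le_mul_of_nonneg_left hpow hC]
      _ ≤ 2 * C * (1 + ‖z‖) ^ N * (2 * ‖z‖) := by gcongr; linarith
      _ = ‖z‖ * (4 * C * (1 + ‖z‖) ^ N) := by ring
  have := le_of_mul_le_mul_left hz' (by linarith)
  nlinarith

lemma Differentiable.exists_polynomial_of_bound {f : ℂ → ℂ} (hf : Differentiable ℂ f) {C : ℝ}
    {N : ℕ} (hb : ∀ z, ‖f z‖ ≤ C * (1 + ‖z‖) ^ N) :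
    ∃ p : Polynomial ℂ, p.natDegree ≤ N ∧ ∀ z, f z = p.eval z := by
  induction N generalizing f C with
  | zero =>
    obtain ⟨c, hc⟩ := hf.exists_const_forall_eq_of_bounded
      ((Metric.isBounded_iff_subset_closedBall 0).2 ⟨C, by rintro _ ⟨z, rfl⟩; simpa using hb z⟩)
    exact ⟨Polynomial.C c, by simp, fun z => by simp [hc z]⟩
  | succ N ih =>
    obtain ⟨C', hg'⟩ := hf.exists_bound_dslope hb
    obtain ⟨p, hp, hpg⟩ := ih (Complex.differentiable_dslope hf 0) hg'
    refine ⟨Polynomial.C (f 0) + Polynomial.X * p, ?_, fun z => ?_⟩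
    · refine (Polynomial.natDegree_add_le _ _).trans (max_le (by simp) ?_)
      exact Polynomial.natDegree_mul_le.trans (by simp; omega)
    · have hslope := sub_smul_dslope f 0 z
      simp only [sub_zero, smul_eq_mul, hpg z] at hslope
      simp [hslope]

lemma one_add_norm_cons_le {E : Type*} [SeminormedAddCommGroup E] {n : ℕ} (z : E) (w : Fin n → E) :
    1 + ‖(Fin.cons z w : Fin (n + 1) → E)‖ ≤ (1 + ‖z‖) * (1 + ‖w‖) := by
  have : ‖(Fin.cons z w : Fin (n + 1) → E)‖ ≤ ‖z‖ + ‖w‖ := by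
    refine (pi_norm_le_iff_of_nonneg (by positivity)).2 fun i => ?_
    cases i using Fin.cases with
    | zero => simp
    | succ i => simpa using (norm_le_pi_norm w i).trans (le_add_of_nonneg_left (norm_nonneg z))
  nlinarith [mul_nonneg (norm_nonneg z) (norm_nonneg w)]

lemma Polynomial.eval_eq_sum_lagrange_basis {F : Type*} [Field F] [DecidableEq F] {s : Finset F}
    {p : Polynomial F} (hp : p.natDegree < s.card) (z : F) :
    p.eval z = ∑ c ∈ s, p.eval c * (Lagrange.basis s id c).eval z := by
  have hdeg : p.degree < s.card := Polynomial.degree_le_natDegree.trans_lt (by exact_mod_cast hp)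
  conv_lhs => rw [Lagrange.eq_interpolate (Function.injective_id.injOn) hdeg]
  simp [Lagrange.interpolate_apply, Polynomial.eval_finsetSum]

lemma MvPolynomial.eval_polynomial_aeval_X {R σ : Type*} [CommRing R] (b : Polynomial R) (i : σ)
    (x : σ → R) : eval x (Polynomial.aeval (X i) b) = b.eval (x i) := by
  induction b using Polynomial.induction_on' <;> simp_all

theorem Differentiable.exists_mvPolynomial_of_hasPolynomialGrowth {n : ℕ} {f : (Fin n → ℂ) → ℂ}
    (hf : Differentiable ℂ f) (hgrowth : HasPolynomialGrowth f) :
    ∃ P : MvPolynomial (Fin n) ℂ, ∀ x, f x = eval x P := by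
  induction n with
  | zero => exact ⟨C (f 0), fun x => by simp [Subsingleton.elim x 0]⟩
  | succ n ih =>
    obtain ⟨K, N, hb⟩ := hgrowth
    have hK : 0 ≤ K := by simpa using (norm_nonneg _).trans (hb 0)
    have hb' (z : ℂ) (w : Fin n → ℂ) :
        ‖f (Fin.cons z w)‖ ≤ K * (1 + ‖w‖) ^ N * (1 + ‖z‖) ^ N := by
      refine (hb _).trans ?_
      rw [mul_assoc, ← mul_pow, mul_comm (1 + ‖w‖)]
      gcongr
      exact one_add_norm_cons_le z w
    have hrow (w : Fin n → ℂ) : ∃ p : Polynomial ℂ, p.natDegree ≤ N ∧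
        ∀ z, f (Fin.cons z w) = p.eval z :=
      (hf.comp (differentiable_id.finCons (differentiable_const w))).exists_polynomial_of_bound
        (hb' · w)
    have hcol (c : ℂ) : ∃ P : MvPolynomial (Fin n) ℂ, ∀ w, f (Fin.cons c w) = eval w P :=
      ih (hf.comp ((differentiable_const c).finCons differentiable_id))
        ⟨K * (1 + ‖c‖) ^ N, N, fun w => by simpa [mul_right_comm K] using hb' c w⟩
    -- interpolate each row at `N + 1` nodes; the values at a node form a column
    choose Q hQ using hcol
    obtain ⟨s, hs⟩ := Infinite.exists_subset_card_eq ℂ (N + 1)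
    refine ⟨∑ c ∈ s, Polynomial.aeval (X 0) (Lagrange.basis s id c) * rename Fin.succ (Q c),
      fun x => ?_⟩
    obtain ⟨p, hp, hpf⟩ := hrow (Fin.tail x)
    rw [← Fin.cons_self_tail x, hpf,
      Polynomial.eval_eq_sum_lagrange_basis (s := s) (by omega)]
    simp [eval_rename, eval_polynomial_aeval_X, ← hpf, hQ, mul_comm, Fin.tail_def]

lemma Polynomial.norm_coeff_mul_le_of_isRoot {K : Type*} [NormedDivisionRing K] {p : Polynomial K}
    {n : ℕ} (hn : p.natDegree ≤ n) {a : K} (ha : p.IsRoot a) :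
    ‖p.coeff n * a‖ ≤ ∑ i ∈ Finset.range (n + 1), ‖p.coeff i‖ := by
  suffices ‖p.coeff n * a‖₊ ≤ ∑ i ∈ Finset.range (n + 1), ‖p.coeff i‖₊ by
    simpa only [← coe_nnnorm, ← NNReal.coe_sum, NNReal.coe_le_coe] using this
  rcases hn.lt_or_eq with hn | rfl
  · simp [p.coeff_eq_zero_of_natDegree_lt hn]
  rcases eq_or_ne p 0 with rfl | hp
  · simp
  have hlc : 0 < ‖p.leadingCoeff‖₊ := by simpa using hp
  have hsup : (Finset.range p.natDegree).sup (‖p.coeff ·‖₊) ≤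
      ∑ i ∈ Finset.range p.natDegree, ‖p.coeff i‖₊ :=
    Finset.sup_le fun i hi => Finset.single_le_sum (f := (‖p.coeff ·‖₊)) (by simp) hi
  calc ‖p.coeff p.natDegree * a‖₊ = ‖p.leadingCoeff‖₊ * ‖a‖₊ := by simp
    _ ≤ ‖p.leadingCoeff‖₊ * cauchyBound p := by gcongr; exact (ha.norm_lt_cauchyBound hp).le
    _ = (Finset.range p.natDegree).sup (‖p.coeff ·‖₊) + ‖p.leadingCoeff‖₊ := by
      rw [cauchyBound, mul_add, mul_div_cancel₀ _ hlc.ne', mul_one]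
    _ ≤ ∑ i ∈ Finset.range (p.natDegree + 1), ‖p.coeff i‖₊ := by
      rw [Finset.sum_range_succ, coeff_natDegree]; gcongr

lemma MvPolynomial.dense_setOf_eval_ne_zero {𝕜 σ : Type*} [NontriviallyNormedField 𝕜] [Fintype σ]
    {Q : MvPolynomial σ 𝕜} (hQ : Q ≠ 0) : Dense {y : σ → 𝕜 | eval y Q ≠ 0} := by
  refine Metric.dense_iff.2 fun x r hr => ?_
  by_contra hempty
  refine hQ (funext_set (fun i => Metric.ball (x i) r)
    (fun i => infinite_of_mem_nhds _ (Metric.ball_mem_nhds _ hr)) fun y hy => ?_)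
  rw [← ball_pi x hr] at hy
  simpa using fun h => hempty ⟨y, hy, h⟩

lemma MvPolynomial.isUnit_of_isRelPrime_of_eval_eq_zero {K σ : Type*} [Field K] [IsAlgClosed K]
    [Finite σ] {P Q : MvPolynomial σ K} (hPQ : IsRelPrime P Q)
    (h : ∀ y, eval y Q = 0 → eval y P = 0) : IsUnit Q := by
  have hP : P ∈ (Ideal.span {Q}).radical := by
    rw [← vanishingIdeal_zeroLocus_eq_radical (K := K), mem_vanishingIdeal_iff]
    exact fun y hy => h y ((mem_zeroLocus_iff.1 hy) Q (Ideal.mem_span_singleton_self Q))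
  obtain ⟨m, hm⟩ := Ideal.mem_radical_iff.1 hP
  exact hPQ.pow_left (m := m) (Ideal.mem_span_singleton.1 hm) dvd_rfl

lemma MvPolynomial.exists_eq_eval_of_continuous_of_mul_eval_eq {σ : Type*} [Fintype σ]
    {g : (σ → ℂ) → ℂ} (hg : Continuous g) {Q H : MvPolynomial σ ℂ} (hQ : Q ≠ 0)
    (hgQ : ∀ y, g y * eval y Q = eval y H) : ∃ P : MvPolynomial σ ℂ, ∀ y, g y = eval y P := by
  -- write `H / Q = P / Q'` in lowest terms; `P` vanishes wherever `Q'` does, so `Q'` is a unit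
  obtain ⟨P, Q', D, hPQ', rfl, rfl⟩ := UniqueFactorizationMonoid.exists_reduced_factors' H Q hQ
  have hD : D ≠ 0 := left_ne_zero_of_mul hQ
  have hgQ' : ∀ y, g y * eval y Q' = eval y P := by
    refine fun y => congrFun (Continuous.ext_on (dense_setOf_eval_ne_zero hD)
      (hg.mul (continuous_eval Q')) (continuous_eval P) fun y hy => ?_) y
    have := hgQ y
    simp only [map_mul] at this
    exact mul_left_cancel₀ hy (by simp only [Pi.mul_apply]; linear_combination this)
  obtain ⟨u, hu⟩ := isUnit_of_isRelPrime_of_eval_eq_zero hPQ' fun y hy => by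
    simpa [hy] using (hgQ' y).symm
  refine ⟨P * ↑u⁻¹, fun y => ?_⟩
  have : eval y Q' * eval y ↑u⁻¹ = 1 := by rw [← map_mul, ← hu, Units.mul_inv, map_one]
  rw [map_mul, ← hgQ' y]
  linear_combination (g y) * this.symm

theorem Differentiable.exists_mvPolynomial_of_isRoot {n : ℕ} {g : (Fin n → ℂ) → ℂ}
    (hg : Differentiable ℂ g) {B : Polynomial (MvPolynomial (Fin n) ℂ)} (hB : B ≠ 0)
    (hroot : ∀ y, (B.map (eval y)).IsRoot (g y)) :
    ∃ P : MvPolynomial (Fin n) ℂ, ∀ y, g y = eval y P := by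
  -- Cauchy's bound makes `leadingCoeff B * g` polynomially bounded, hence a polynomial
  have hgrowth : HasPolynomialGrowth fun y => eval y B.leadingCoeff * g y := by
    refine (HasPolynomialGrowth.sum (Finset.range (B.natDegree + 1)) fun i _ =>
      (hasPolynomialGrowth_eval (B.coeff i)).norm).mono fun y => ?_
    simpa using Polynomial.norm_coeff_mul_le_of_isRoot Polynomial.natDegree_map_le (hroot y)
  have hdiff : Differentiable ℂ fun y => eval y B.leadingCoeff * g y :=
    (differentiableOn_univ.1 (AnalyticOnNhd.eval_mvPolynomial _).differentiableOn).mul hg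
  obtain ⟨H, hH⟩ := hdiff.exists_mvPolynomial_of_hasPolynomialGrowth hgrowth
  exact exists_eq_eval_of_continuous_of_mul_eval_eq hg.continuous
    (Polynomial.leadingCoeff_ne_zero.2 hB) fun y => by rw [mul_comm, hH]

lemma MvPolynomial.exists_ne_zero_aeval_eq_zero {R : Type*} [CommRing R] [IsDomain R] {n : ℕ}
    (x : Fin (n + 1) → MvPolynomial (Fin n) R) :
    ∃ A : MvPolynomial (Fin (n + 1)) R, A ≠ 0 ∧ aeval x A = 0 := by
  have hx : ¬ AlgebraicIndependent R x := fun hx => by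
    have := hx.lift_cardinalMk_le_trdeg
    rw [MvPolynomial.trdeg_of_isDomain] at this
    simp at this
  simpa [algebraicIndependent_iff, and_comm] using hx

lemma MvPolynomial.exists_isRoot_of_leftInverse {K : Type*} [Field K] {n : ℕ}
    (q : Fin n → MvPolynomial (Fin n) K) {G : (Fin n → K) → Fin n → K}
    (hGF : Function.LeftInverse G fun x i => eval x (q i))
    (hF : Function.Surjective fun x i => eval x (q i)) (i : Fin n) :
    ∃ B : Polynomial (MvPolynomial (Fin n) K), B ≠ 0 ∧ ∀ y, (B.map (eval y)).IsRoot (G y i) := by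
  set v : Fin (n + 1) → MvPolynomial (Fin n) K := Fin.cons (X i) q
  obtain ⟨A, hA, hAv⟩ := exists_ne_zero_aeval_eq_zero v
  refine ⟨finSuccEquiv K n A, (map_ne_zero_iff _ (AlgEquiv.injective _)).2 hA, fun y => ?_⟩
  obtain ⟨x, rfl⟩ := hF y
  have hcons : (fun j => eval x (v j)) = Fin.cons (x i) fun j => eval x (q j) := by
    ext j; cases j using Fin.cases <;> simp [v]
  have hAx := congrArg (aeval x) hAv
  rw [← AlgHom.comp_apply, comp_aeval, map_zero] at hAx
  simpa [Polynomial.IsRoot, hGF x, ← eval_eq_eval_mv_eval', ← hcons] using hAx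

theorem MvPolynomial.exists_eval_eq_of_differentiable_leftInverse {n : ℕ}
    (q : Fin n → MvPolynomial (Fin n) ℂ) {G : (Fin n → ℂ) → Fin n → ℂ} (hG : Differentiable ℂ G)
    (hGF : Function.LeftInverse G fun x i => eval x (q i))
    (hF : Function.Surjective fun x i => eval x (q i)) :
    ∃ r : Fin n → MvPolynomial (Fin n) ℂ, ∀ y i, G y i = eval y (r i) := by
  have (i : Fin n) : ∃ r : MvPolynomial (Fin n) ℂ, ∀ y, G y i = eval y r := by
    obtain ⟨B, hB, hroot⟩ := exists_isRoot_of_leftInverse q hGF hF i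
    exact (differentiable_pi.1 hG i).exists_mvPolynomial_of_isRoot hB hroot
  choose r hr using this
  exact ⟨r, fun y i => hr i y⟩

lemma MvPolynomial.hasFDerivAt_eval {𝕜 σ : Type*} [NontriviallyNormedField 𝕜] [Fintype σ]
    [DecidableEq σ] (p : MvPolynomial σ 𝕜) (x : σ → 𝕜) :
    HasFDerivAt (fun x => eval x p)
      (∑ j, eval x (pderiv j p) • (ContinuousLinearMap.proj j : (σ → 𝕜) →L[𝕜] 𝕜)) x := by
  induction p using MvPolynomial.induction_on with
  | C a => simpa using (hasFDerivAt_const a x).congr_fderiv (by ext; simp)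
  | add p q hp hq =>
    refine (hp.add hq).congr_fderiv ?_ |>.congr_of_eventuallyEq (.of_forall fun y => ?_)
    · ext v; simp [add_mul, Finset.sum_add_distrib]
    · simp
  | mul_X p i hp =>
    refine (hp.mul (hasFDerivAt_apply i x)).congr_fderiv ?_ |>.congr_of_eventuallyEq
      (.of_forall fun y => ?_)
    · ext v
      simp [pderiv_X, Pi.single_apply, add_mul, Finset.sum_add_distrib, Finset.mul_sum, mul_assoc,
        apply_ite (eval x)]
    · simp

lemma MvPolynomial.hasFDerivAt_eval_pi {𝕜 ι σ : Type*} [NontriviallyNormedField 𝕜]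
    [CompleteSpace 𝕜] [Fintype ι] [Fintype σ] [DecidableEq σ] (q : ι → MvPolynomial σ 𝕜)
    (x : σ → 𝕜) :
    HasFDerivAt (fun x i => eval x (q i))
      (Matrix.toLin' (Matrix.of fun i j => eval x (pderiv j (q i)))).toContinuousLinearMap x :=
  hasFDerivAt_pi'.2 fun i => (hasFDerivAt_eval (q i) x).congr_fderiv <| by
    ext v; simp [Matrix.mulVec, dotProduct]

lemma MvPolynomial.exists_hasStrictFDerivAt_equiv {𝕜 σ : Type*} [NontriviallyNormedField 𝕜]
    [CompleteSpace 𝕜] [Fintype σ] [DecidableEq σ] (q : σ → MvPolynomial σ 𝕜)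
    (hdet : ∀ x, (Matrix.of fun i j => eval x (pderiv j (q i))).det ≠ 0) :
    ∃ E : (σ → 𝕜) → (σ → 𝕜) ≃L[𝕜] (σ → 𝕜),
      ∀ x, HasStrictFDerivAt (fun x i => eval x (q i)) (E x : (σ → 𝕜) →L[𝕜] σ → 𝕜) x := by
  have hL (x : σ → 𝕜) : (Matrix.toLin' (Matrix.of fun i j => eval x (pderiv j (q i)))
      ).toContinuousLinearMap.det ≠ 0 := by
    simpa [ContinuousLinearMap.det, LinearMap.det_toLin'] using hdet x
  refine ⟨fun x => ContinuousLinearMap.toContinuousLinearEquivOfDetNeZero _ (hL x), fun x => ?_⟩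
  have hanalytic : AnalyticAt 𝕜 (fun x i => eval x (q i)) x :=
    analyticAt_pi_iff.2 fun i => AnalyticOnNhd.eval_mvPolynomial (q i) x trivial
  simpa [(hasFDerivAt_eval_pi q x).fderiv] using hanalytic.hasStrictFDerivAt

open Topology in
theorem IsOpenMap.injective_of_injOn_of_finite_compl {X Y : Type*} [TopologicalSpace X]
    [T2Space X] [TopologicalSpace Y] [T1Space Y] [∀ y : Y, (𝓝[≠] y).NeBot] {f : X → Y}
    (hf : IsOpenMap f) {Ω : Set X} (hΩ : Ωᶜ.Finite) (hinj : Set.InjOn f Ω) :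
    Function.Injective f := by
  intro a b hab
  by_contra hne
  obtain ⟨U, V, hU, hV, haU, hbV, hUV⟩ := t2_separation hne
  -- an infinite neighbourhood of `f a` is covered twice, from `U` and from `V`
  have hW : f '' U ∩ f '' V ∈ 𝓝 (f a) := Filter.inter_mem
    ((hf U hU).mem_nhds ⟨a, haU, rfl⟩) ((hf V hV).mem_nhds ⟨b, hbV, hab.symm⟩)
  obtain ⟨_, ⟨⟨u, hu, rfl⟩, v, hv, hvu⟩, hbad⟩ :=
    ((infinite_of_mem_nhds _ hW).sdiff (hΩ.image f)).nonempty
  have huΩ : u ∈ Ω := by_contra fun h => hbad ⟨u, h, rfl⟩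
  have hvΩ : v ∈ Ω := by_contra fun h => hbad ⟨v, h, hvu⟩
  exact hUV.le_bot ⟨hu, hinj hvΩ huΩ hvu ▸ hv⟩

theorem jacobian_pair_automorphism_of_injOn_cofinite_general
    (F : (Fin 2 → ℂ) → (Fin 2 → ℂ)) (hF : IsJacobianPair F)
    (Ω : Set (Fin 2 → ℂ)) (hΩcof : Ωᶜ.Finite)
    (hinj : Set.InjOn F Ω) :
    Function.Injective F ∧
    ∃ G : (Fin 2 → ℂ) → (Fin 2 → ℂ), IsPolyMap G ∧
      Function.LeftInverse G F ∧ Function.RightInverse G F := by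
  obtain ⟨q, hq, c, hc, hdet⟩ := hF
  obtain rfl : F = fun x i => eval x (q i) := funext fun x => funext (hq x)
  obtain ⟨E, hE⟩ := exists_hasStrictFDerivAt_equiv q fun x => hdet x ▸ hc
  have hopen := isOpenMap_of_hasStrictFDerivAt_equiv hE
  have hinjF := hopen.injective_of_injOn_of_finite_compl hΩcof hinj
  let e := (Equiv.ofBijective _ ⟨hinjF, ax_grothendieck_univ q hinjF⟩).toHomeomorphOfContinuousOpen
    (continuous_pi fun i => continuous_eval (q i)) hopen
  have hG : Differentiable ℂ e.symm := fun y =>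
    (HasFDerivAt.of_local_left_inverse e.symm.continuous.continuousAt (hE (e.symm y)).hasFDerivAt
      (.of_forall e.apply_symm_apply)).differentiableAt
  obtain ⟨r, hr⟩ :=
    exists_eval_eq_of_differentiable_leftInverse q hG e.symm_apply_apply e.surjective
  exact ⟨hinjF, e.symm, ⟨r, hr⟩, e.symm_apply_apply, e.apply_symm_apply⟩

/-- If a Jacobian pair is injective on a cofinite invariant subset
`Ω ⊆ ℂ²`, then it is injective and an automorphism of `ℂ²`. -/
theorem jacobian_pair_automorphism_of_injOn_cofinite
    (F : (Fin 2 → ℂ) → (Fin 2 → ℂ)) (hF : IsJacobianPair F)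
    (Ω : Set (Fin 2 → ℂ)) (hΩcof : Ωᶜ.Finite) (hinv : F '' Ω ⊆ Ω)
    (hinj : Set.InjOn F Ω) :
    Function.Injective F ∧
    ∃ G : (Fin 2 → ℂ) → (Fin 2 → ℂ), IsPolyMap G ∧
      Function.LeftInverse G F ∧ Function.RightInverse G F :=
  jacobian_pair_automorphism_of_injOn_cofinite_general F hF Ω hΩcof hinj
end

section
/- Let f : X → X be a map of a nonempty set to itself, let E^k = X − f^k(X) for k ≥ 1, let E = E^1, and let E^∞ = ⋃_{k>0} E^k. Suppose E is finite and the sequence (E^k) is not stable (there is no K with E^K = E^k for all k ≥ K). Then there exists a point e ∈ E such that all the points f^k(e) for k > 0 belong to E^∞ and are pairwise distinct, and for any such e there is a positive integer M such that for every k ≥ M the equation f(x) = f^k(e) has exactly one solution in X, namely x = f^{k−1}(e). -/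
open Set Function

namespace DynAux

variable {X : Type*}

/-- `D f k = f^k(X) \ f^{k+1}(X)`, the "new" points of `E^{k+1}`. -/
def D (f : X → X) (k : ℕ) : Set X := Set.range f^[k] \ Set.range f^[k+1]
lemma range_mono (f : X → X) {a b : ℕ} (h : a ≤ b) :
    Set.range f^[b] ⊆ Set.range f^[a] := by
  obtain ⟨c, rfl⟩ := Nat.exists_eq_add_of_le h
  rintro x ⟨y, rfl⟩
  exact ⟨f^[c] y, (Function.iterate_add_apply f a c y).symm⟩

lemma D_zero (f : X → X) : D f 0 = (Set.range f^[1])ᶜ := by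
  simp [D, Set.compl_eq_univ_diff]

lemma eq_of_mem_D (f : X → X) {k j : ℕ} {x : X} (hk : x ∈ D f k) (hj : x ∈ D f j) :
    k = j := by
  by_contra hne
  rcases Nat.lt_or_ge k j with h | h
  · exact hk.2 (range_mono f h hj.1)
  · exact hj.2 (range_mono f (lt_of_le_of_ne' h hne) hk.1)

lemma notMem_range_of_apply (f : X → X) {n : ℕ} {x : X}
    (h : f x ∉ Set.range f^[n+1]) : x ∉ Set.range f^[n] := by
  rintro ⟨y, rfl⟩
  exact h ⟨y, Function.iterate_succ_apply' f n y⟩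

lemma D_succ_subset_image (f : X → X) (k : ℕ) : D f (k+1) ⊆ f '' D f k := by
  rintro y ⟨⟨z, rfl⟩, hy⟩
  refine ⟨f^[k] z, ⟨⟨z, rfl⟩, ?_⟩, (Function.iterate_succ_apply' f k z).symm⟩
  rintro ⟨w, hw⟩
  exact hy ⟨w, by rw [show k+1+1 = (k+1)+1 from rfl, Function.iterate_succ_apply' f (k+1) w,
    hw, ← Function.iterate_succ_apply' f k z]⟩

lemma exists_chain (f : X → X) :
    ∀ k, ∀ y ∈ D f k, ∃ e ∈ D f 0, (∀ i ≤ k, f^[i] e ∈ D f i) ∧ f^[k] e = y := by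
  intro k
  induction k with
  | zero =>
    intro y hy
    exact ⟨y, hy, fun i hi => by simpa [Nat.le_zero.mp hi] using hy, rfl⟩
  | succ k ih =>
    intro y hy
    obtain ⟨x, hx, hfx⟩ := D_succ_subset_image f k hy
    obtain ⟨e, he, hchain, hek⟩ := ih x hx
    have hiter : f^[k+1] e = y := by
      rw [Function.iterate_succ_apply', hek, hfx]
    refine ⟨e, he, ?_, hiter⟩
    intro i hi
    rcases Nat.lt_succ_iff_lt_or_eq.mp (Nat.lt_succ_of_le hi) with h | h
    · exact hchain i (Nat.lt_succ_iff.mp h)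
    · subst h; rw [hiter]; exact hy

lemma D_finite (f : X → X) (h : ((Set.range f^[1])ᶜ : Set X).Finite) :
    ∀ k, (D f k).Finite := by
  intro k
  induction k with
  | zero => exact (D_zero f) ▸ h
  | succ k ih => exact (ih.image f).subset (D_succ_subset_image f k)

lemma compl_range_finite (f : X → X) (h : ((Set.range f^[1])ᶜ : Set X).Finite) :
    ∀ k, ((Set.range f^[k])ᶜ : Set X).Finite := by
  intro k
  induction k with
  | zero => simp
  | succ k ih =>
    refine (ih.union (D_finite f h k)).subset ?_
    intro x hx
    by_cases hk : x ∈ Set.range f^[k]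
    · exact Or.inr ⟨hk, hx⟩
    · exact Or.inl hk

lemma D_nonempty (f : X → X)
    (h : ∀ K, 0 < K → ∃ k, K ≤ k ∧ Set.range f^[k] ≠ Set.range f^[K]) :
    ∀ k, (D f k).Nonempty := by
  intro k
  rw [Set.nonempty_iff_ne_empty]
  intro hkempty
  -- all later diffs are empty
  have hall : ∀ m, k ≤ m → D f m = ∅ := by
    intro m hm
    induction m with
    | zero => simpa [Nat.le_zero.mp hm] using hkempty
    | succ m ih =>
      rcases Nat.lt_succ_iff_lt_or_eq.mp (Nat.lt_succ_of_le hm) with h' | h'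
      · have := ih (Nat.lt_succ_iff.mp h')
        rw [Set.eq_empty_iff_forall_notMem]
        intro x hx
        obtain ⟨y, hy, _⟩ := D_succ_subset_image f m hx
        simp [this] at hy
      · rw [← h']; exact hkempty
  have hrange : ∀ m, k ≤ m → Set.range f^[m] = Set.range f^[m+1] := by
    intro m hm
    refine le_antisymm ?_ (range_mono f (Nat.le_succ m))
    intro x hx
    by_contra hx'
    exact Set.eq_empty_iff_forall_notMem.mp (hall m hm) x ⟨hx, hx'⟩
  obtain ⟨j, hj, hne⟩ := h (k+1) (Nat.succ_pos k)
  apply hne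
  clear hne
  induction j with
  | zero => omega
  | succ j ih =>
    rcases Nat.lt_succ_iff_lt_or_eq.mp (Nat.lt_succ_of_le hj) with h' | h'
    · rw [← hrange j (by omega)]
      exact ih (Nat.lt_succ_iff.mp h')
    · rw [← h']

lemma exists_good (f : X → X) (hfin : ((Set.range f^[1])ᶜ : Set X).Finite)
    (hne : ∀ k, (D f k).Nonempty) :
    ∃ e ∈ D f 0, ∀ k, f^[k] e ∈ D f k := by
  by_contra hcon
  push_neg at hcon
  have hcon' : ∀ e, ∃ k, e ∈ D f 0 → f^[k] e ∉ D f k := by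
    intro e
    by_cases h : e ∈ D f 0
    · obtain ⟨k, hk⟩ := hcon e h
      exact ⟨k, fun _ => hk⟩
    · exact ⟨0, fun h' => absurd h' h⟩
  choose F hF using hcon'
  have hDfin : (D f 0).Finite := D_finite f hfin 0
  obtain ⟨N, hN⟩ := (hDfin.image F).bddAbove
  obtain ⟨y, hy⟩ := hne N
  obtain ⟨e, he, hchain, -⟩ := exists_chain f N y hy
  exact hF e he (hchain (F e) (hN (Set.mem_image_of_mem F he)))

lemma exists_mem_D (f : X → X) {x : X} {a : ℕ} (ha : x ∈ Set.range f^[a])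
    {n : ℕ} (hn : x ∉ Set.range f^[n]) : ∃ j, a ≤ j ∧ x ∈ D f j := by
  classical
  have hP : ∃ m, x ∉ Set.range f^[m] := ⟨n, hn⟩
  set n₀ := Nat.find hP with hn₀def
  have hspec : x ∉ Set.range f^[n₀] := Nat.find_spec hP
  have hge : a + 1 ≤ n₀ := by
    by_contra h
    exact hspec (range_mono f (by omega) ha)
  refine ⟨n₀ - 1, by omega, ?_, ?_⟩
  · have : ¬ x ∉ Set.range f^[n₀ - 1] := Nat.find_min hP (by omega)
    simpa using this
  · have : n₀ - 1 + 1 = n₀ := by omega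
    rw [this]; exact hspec

lemma unique_preimage (f : X → X) (hfin : ((Set.range f^[1])ᶜ : Set X).Finite)
    (e : X) (horb : ∀ k, 0 < k → f^[k] e ∈ ⋃ j, ⋃ (_ : 0 < j), ((Set.range f^[j])ᶜ : Set X)) :
    ∃ M, 0 < M ∧ ∀ k, M ≤ k → ∀ x, f x = f^[k] e ↔ x = f^[k - 1] e := by
  classical
  have hDfin := D_finite f hfin
  -- cardinalities
  set c : ℕ → ℕ := fun m => (D f m).ncard with hc
  have hcanti : Antitone c := by
    refine antitone_nat_of_succ_le fun m => ?_
    exact le_trans (Set.ncard_le_ncard (D_succ_subset_image f m) ((hDfin m).image f))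
      (Set.ncard_image_le (hDfin m))
  obtain ⟨cm, ⟨M₀, hM₀⟩, hmin⟩ := wellFounded_lt.has_min (Set.range c) ⟨c 0, 0, rfl⟩
  have hcmin : ∀ m, c M₀ ≤ c m := fun m => by
    rw [hM₀]; exact not_lt.mp (hmin (c m) ⟨m, rfl⟩)
  have hconst : ∀ m, M₀ ≤ m → c m = c M₀ := fun m hm =>
    le_antisymm (hcanti hm) (hcmin m)
  -- image equality and injectivity beyond M₀
  have himg : ∀ m, M₀ ≤ m → f '' D f m = D f (m+1) := by
    intro m hm
    refine (Set.eq_of_subset_of_ncard_le (D_succ_subset_image f m) ?_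
      ((hDfin m).image f)).symm
    calc (f '' D f m).ncard ≤ (D f m).ncard := Set.ncard_image_le (hDfin m)
      _ = c M₀ := hconst m hm
      _ = (D f (m+1)).ncard := (hconst (m+1) (by omega)).symm
  have hinj : ∀ m, M₀ ≤ m → Set.InjOn f (D f m) := by
    intro m hm
    refine Set.injOn_of_ncard_image_eq ?_ (hDfin m)
    rw [himg m hm]
    rw [show (D f (m+1)).ncard = c (m+1) from rfl, show (D f m).ncard = c m from rfl,
      hconst m hm, hconst (m+1) (by omega)]
  -- the index function m
  have key : ∀ k, ∃ m, k + 1 ≤ m ∧ f^[k+1] e ∈ D f m := by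
    intro k
    have h1 := horb (k+1) (Nat.succ_pos k)
    simp only [Set.mem_iUnion] at h1
    obtain ⟨j, _, hj⟩ := h1
    exact exists_mem_D f ⟨e, rfl⟩ hj
  choose m hmge hmD using key
  -- step lemma
  have hstep : ∀ k, M₀ ≤ m k → m (k+1) = m k + 1 := by
    intro k hk
    have h1 : f^[k+2] e ∈ D f (m k + 1) := by
      rw [← himg (m k) hk]
      exact ⟨f^[k+1] e, hmD k, (Function.iterate_succ_apply' f (k+1) e).symm⟩
    exact eq_of_mem_D f (hmD (k+1)) h1
  -- bad preimages
  set B : ℕ → Set X := fun m => f ⁻¹' (D f (m+1)) \ D f m with hBdef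
  have hB : ∀ n, M₀ ≤ n → B n ⊆ ((Set.range f^[M₀])ᶜ : Set X) := by
    intro n hn x hx
    obtain ⟨hx1, hx2⟩ := hx
    intro hxR
    -- x ∈ range f^[M₀]; fx ∈ D f (n+1) so x ∉ range f^[n+1]
    have hxnot : x ∉ Set.range f^[n+1] := notMem_range_of_apply f hx1.2
    obtain ⟨j, hjge, hjD⟩ := exists_mem_D f hxR hxnot
    have : f x ∈ D f (j+1) := by
      rw [← himg j hjge]
      exact ⟨x, hjD, rfl⟩
    have hjn : j + 1 = n + 1 := eq_of_mem_D f this hx1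
    exact hx2 (by rwa [show j = n by omega] at hjD)
  -- B n is eventually empty
  set T : Set ℕ := {n | M₀ ≤ n ∧ (B n).Nonempty} with hTdef
  set g : ℕ → X := fun n => if h : (B n).Nonempty then h.choose else f e with hgdef
  have hgmem : ∀ n ∈ T, g n ∈ B n := by
    intro n hn
    simp only [hgdef, dif_pos hn.2]
    exact hn.2.choose_spec
  have hginj : Set.InjOn g T := by
    intro a ha b hb hab
    have h1 : f (g a) ∈ D f (a+1) := (hgmem a ha).1
    have h2 : f (g b) ∈ D f (b+1) := (hgmem b hb).1
    rw [hab] at h1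
    have := eq_of_mem_D f h1 h2
    omega
  have hTfin : T.Finite := by
    refine Set.Finite.of_finite_image ?_ hginj
    refine (compl_range_finite f hfin M₀).subset ?_
    rintro y ⟨n, hn, rfl⟩
    exact hB n hn.1 (hgmem n hn)
  obtain ⟨b, hbT⟩ := hTfin.bddAbove
  set M₁ : ℕ := max M₀ b + 1 with hM₁
  have hBempty : ∀ n, M₁ ≤ n → B n = ∅ := by
    intro n hn
    rw [Set.eq_empty_iff_forall_notMem]
    intro x hx
    have : n ∈ T := ⟨by omega, ⟨x, hx⟩⟩
    have := hbT this
    omega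
  -- final
  refine ⟨max M₀ M₁ + 2, by omega, ?_⟩
  intro k hk x
  obtain ⟨j, rfl⟩ : ∃ j, k = j + 2 := ⟨k - 2, by omega⟩
  have hj1 : M₀ ≤ m j := le_trans (by omega) (hmge j)
  have hj2 : M₁ ≤ m j := le_trans (by omega) (hmge j)
  constructor
  · intro hfx
    -- f x ∈ D f (m j + 1)
    have hfxD : f x ∈ D f (m j + 1) := by
      rw [hfx, show j + 2 = (j+1)+1 from rfl, ← hstep j hj1]
      exact hmD (j+1)
    have hxD : x ∈ D f (m j) := by
      by_contra hxn
      exact Set.eq_empty_iff_forall_notMem.mp (hBempty (m j) hj2) x ⟨hfxD, hxn⟩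
    have : f x = f (f^[j+1] e) := by
      rw [hfx]; exact Function.iterate_succ_apply' f (j+1) e
    have := hinj (m j) hj1 hxD (hmD j) this
    simpa using this
  · rintro rfl
    rw [show j + 2 - 1 = j + 1 from rfl]
    exact (Function.iterate_succ_apply' f (j+1) e).symm

end DynAux
/-- If `E = X − f(X)` is finite and the sequence `E^k = X − f^k(X)` is not
stable, then there is `e ∈ E` whose forward orbit consists of pairwise distinct points of
`E^∞ = ⋃_{k>0} E^k`, and for every such `e` there is `M > 0` such that for `k ≥ M` the
equation `f(x) = f^k(e)` has `x = f^{k-1}(e)` as its unique solution. -/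
theorem dynamics_lemma {X : Type*} [Nonempty X] (f : X → X)
    (E : ℕ → Set X) (hE : ∀ k, E k = (Set.range f^[k])ᶜ)
    (hfin : (E 1).Finite)
    (hunstable : ¬ ∃ K > 0, ∀ k ≥ K, E k = E K) :
    (∃ e ∈ E 1,
      (∀ k > 0, f^[k] e ∈ ⋃ j > 0, E j) ∧
      (∀ k > 0, ∀ j > 0, k ≠ j → f^[k] e ≠ f^[j] e)) ∧
    (∀ e ∈ E 1,
      ((∀ k > 0, f^[k] e ∈ ⋃ j > 0, E j) ∧
        (∀ k > 0, ∀ j > 0, k ≠ j → f^[k] e ≠ f^[j] e)) →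
      ∃ M > 0, ∀ k ≥ M, ∀ x, f x = f^[k] e ↔ x = f^[k - 1] e) := by
  have hfin' : ((Set.range f^[1])ᶜ : Set X).Finite := by rwa [hE 1] at hfin
  have hunst' : ∀ K, 0 < K → ∃ k, K ≤ k ∧ Set.range f^[k] ≠ Set.range f^[K] := by
    intro K hK
    by_contra h
    push_neg at h
    refine hunstable ⟨K, hK, fun k hk => ?_⟩
    rw [hE k, hE K, h k hk]
  have hne := DynAux.D_nonempty f hunst'
  constructor
  · obtain ⟨e, he, hDe⟩ := DynAux.exists_good f hfin' hne
    refine ⟨e, ?_, ?_, ?_⟩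
    · rw [hE 1, ← DynAux.D_zero f]; exact he
    · intro k hk
      simp only [hE, Set.mem_iUnion]
      exact ⟨k + 1, Nat.succ_pos k, (hDe k).2⟩
    · intro k _ j _ hkj heq
      exact hkj (DynAux.eq_of_mem_D f (hDe k) (heq ▸ hDe j))
  · intro e _ ⟨horb, _⟩
    have horb' : ∀ k, 0 < k →
        f^[k] e ∈ ⋃ j, ⋃ (_ : 0 < j), ((Set.range f^[j])ᶜ : Set X) := by
      intro k hk
      have := horb k hk
      simpa only [hE] using this
    obtain ⟨M, hM, h⟩ := DynAux.unique_preimage f hfin' e horb'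
    exact ⟨M, hM, h⟩
end

section
/- Let f : ℂ² → ℂ² be the polynomial map f(x,y) = (x − 2(xy+1) − y(xy+1)², −1 − y(xy+1)). Then the image of f is exactly ℂ² − {(0,0)}; in particular, setting Ω = ℂ² − {(0,0)}, one has f(Ω) = Ω, so Ω is the stable image of f, and the restriction f|_Ω : Ω → Ω is a surjective endomorphism of Ω that is not injective. -/
/-- The example map `f(x,y) = (x − 2(xy+1) − y(xy+1)², −1 − y(xy+1))`. -/
def exampleMap : ℂ × ℂ → ℂ × ℂ := fun p =>
  (p.1 - 2 * (p.1 * p.2 + 1) - p.2 * (p.1 * p.2 + 1) ^ 2,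
    -1 - p.2 * (p.1 * p.2 + 1))

-- (0,0) is not in the range
lemma exampleMap_ne_zero (p : ℂ × ℂ) : exampleMap p ≠ ((0:ℂ), (0:ℂ)) := by
  obtain ⟨x, y⟩ := p
  simp only [ne_eq, exampleMap, Prod.mk.injEq, not_and]
  intro h0 h1
  have h0' : x = x*y+1 := by linear_combination h0 - (x*y+1)*h1
  have h1' : y*(x*y+1) = -1 := by linear_combination -h1
  have hxy : x*y = -1 := by linear_combination y * h0' + h1'
  have hx0 : x = 0 := by linear_combination h0' + hxy
  rw [hx0] at hxy
  simp at hxy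

-- existence of a nonzero root of the quadratic
lemma exists_root (a b : ℂ) (h : ¬(a = 0 ∧ b = 0)) (hb : b ≠ -1) :
    ∃ t : ℂ, t ≠ 0 ∧ t^2 - b^2*t + a*(1+b) = 0 := by
  by_cases ha : a = 0
  · have hbne : b ≠ 0 := fun hB => h ⟨ha, hB⟩
    exact ⟨b^2, pow_ne_zero 2 hbne, by rw [ha]; ring⟩
  · obtain ⟨d, hd⟩ := Complex.isAlgClosed.exists_pow_nat_eq (b^4 - 4*a*(1+b)) (by norm_num : 0 < 2)
    refine ⟨(b^2 + d)/2, ?_, by linear_combination hd/4⟩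
    intro h0
    have : a*(1+b) = 0 := by
      have : ((b^2+d)/2)^2 - b^2*((b^2+d)/2) + a*(1+b) = 0 := by linear_combination hd/4
      rw [h0] at this; linear_combination this
    rcases mul_eq_zero.1 this with h'|h'
    · exact ha h'
    · exact hb (by linear_combination h')

lemma exampleMap_surj (a b : ℂ) (h : ¬(a = 0 ∧ b = 0)) :
    ∃ p : ℂ × ℂ, exampleMap p = (a, b) := by
  by_cases hb : b = -1
  · exact ⟨(a+2, 0), by simp [exampleMap, hb]⟩
  · obtain ⟨t, ht0, ht⟩ := exists_root a b h hb
    refine ⟨(a + t*(1-b), -(1+b)/t), ?_⟩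
    have hxy : (a + t*(1-b)) * (-(1+b)/t) + 1 = t := by
      field_simp
      linear_combination -ht
    simp only [exampleMap, hxy, Prod.mk.injEq]
    have hy : (-(1+b)/t) * t = -(1+b) := by field_simp
    constructor
    · linear_combination -t*hy
    · linear_combination -hy

lemma range_exampleMap : Set.range exampleMap = {((0 : ℂ), (0 : ℂ))}ᶜ := by
  ext ⟨a, b⟩
  simp only [Set.mem_range, Set.mem_compl_iff, Set.mem_singleton_iff, Prod.mk.injEq]
  constructor
  · rintro ⟨p, hp⟩ ⟨ha, hb⟩
    exact exampleMap_ne_zero p (by rw [hp, ha, hb])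
  · intro h
    exact exampleMap_surj a b (by rintro ⟨ha, hb⟩; exact h ⟨ha, hb⟩)

lemma image_compl : exampleMap '' {((0 : ℂ), (0 : ℂ))}ᶜ = {((0 : ℂ), (0 : ℂ))}ᶜ := by
  apply Set.Subset.antisymm
  · intro q ⟨p, _, hp⟩
    rw [← hp]
    exact exampleMap_ne_zero p
  · intro q hq
    have : q ∈ Set.range exampleMap := by rw [range_exampleMap]; exact hq
    obtain ⟨p, hp⟩ := this
    by_cases h00 : p = ((0:ℂ), (0:ℂ))
    · -- then q = exampleMap (0,0) = (-2,-1); use (-2, 1/2) instead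
      refine ⟨((-2 : ℂ), (1/2 : ℂ)), ?_, ?_⟩
      · simp [Set.mem_compl_iff, Prod.ext_iff]
      · rw [← hp, h00]
        simp only [exampleMap]
        norm_num
    · exact ⟨p, h00, hp⟩

lemma iter_image_compl (k : ℕ) :
    exampleMap^[k] '' {((0 : ℂ), (0 : ℂ))}ᶜ = {((0 : ℂ), (0 : ℂ))}ᶜ := by
  induction k with
  | zero => simp
  | succ n ih =>
    rw [Function.iterate_succ', Set.image_comp, ih, image_compl]

lemma iter_image_univ (k : ℕ) (hk : 0 < k) :
    exampleMap^[k] '' Set.univ = {((0 : ℂ), (0 : ℂ))}ᶜ := by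
  obtain ⟨n, rfl⟩ := Nat.exists_eq_succ_of_ne_zero hk.ne'
  rw [Function.iterate_succ, Set.image_comp, Set.image_univ, range_exampleMap,
    iter_image_compl]

/-- The image of the example map is exactly the punctured plane
`Ω = ℂ² − {(0,0)}`; in particular `f(Ω) = Ω`, `Ω` is the stable image of `f`, and the
restriction `f|_Ω : Ω → Ω` is surjective but not injective. -/
theorem exampleMap_image :
    Set.range exampleMap = {((0 : ℂ), (0 : ℂ))}ᶜ ∧
    exampleMap '' {((0 : ℂ), (0 : ℂ))}ᶜ = {((0 : ℂ), (0 : ℂ))}ᶜ ∧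
    (⋂ k > 0, exampleMap^[k] '' Set.univ) = {((0 : ℂ), (0 : ℂ))}ᶜ ∧
    ¬ Set.InjOn exampleMap {((0 : ℂ), (0 : ℂ))}ᶜ := by
  refine ⟨range_exampleMap, image_compl, ?_, ?_⟩
  · apply Set.Subset.antisymm
    · intro p hp
      simp only [Set.mem_iInter] at hp
      have := hp 1 one_pos
      rwa [iter_image_univ 1 one_pos] at this
    · intro p hp
      simp only [Set.mem_iInter]
      intro k hk
      rw [iter_image_univ k hk]
      exact hp
  · intro hinj
    have h1 : ((3:ℂ), (0:ℂ)) ∈ ({((0 : ℂ), (0 : ℂ))}ᶜ : Set (ℂ × ℂ)) := by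
      simp [Prod.ext_iff]
    have h2 : ((1:ℂ), (-1:ℂ)) ∈ ({((0 : ℂ), (0 : ℂ))}ᶜ : Set (ℂ × ℂ)) := by
      simp [Prod.ext_iff]
    have heq : exampleMap ((3:ℂ), (0:ℂ)) = exampleMap ((1:ℂ), (-1:ℂ)) := by
      simp only [exampleMap]; norm_num
    have := hinj h1 h2 heq
    simp [Prod.ext_iff] at this
end
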